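/- Let A be a finite-dimensional algebra with a generalized H-action over an algebraically closed field F, with weak Wedderburn–Malcev data (B, κ) as in the main lemma: A/J^H(A) = B₁ ⊕ ⋯ ⊕ B_q a direct sum of H-invariant ideals with each Bᵢ unital, B the maximal semisimple subalgebra of A/J^H(A) with A/J^H(A) = B ⊕ J(A/J^H(A)). Then 1_B = 1_{A/J^H(A)}, the algebras B̃ᵢ := 1_{Bᵢ}B satisfy B = B̃₁ ⊕ ⋯ ⊕ B̃_q (direct sum of ideals), each B̃ᵢ is a maximal semisimple subalgebra of Bᵢ, and 1_{B̃ᵢ} = 1_{Bᵢ} ∈ B. -/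

import Mathlib

/-! The identities `eᵢ` of the ideals `Bᵢ` are orthogonal central idempotents summing to the
identity of `Q`. A central idempotent `u` lies in any subalgebra `B` complementary to a nilpotent
ideal `J`: writing `u = b + j`, the element `b` is idempotent, and `u - ub`, `b - bu` are
idempotents of `J`, hence zero, so `u = ub = b`. Thus every `eᵢ` lies in `B`, and multiplication
by the `eᵢ` splits `B` into the ideals `eᵢB`. A nilpotent ideal of `eᵢB` is one of `B`, so `eᵢB` is
semisimple. If `eᵢB ⊆ C ⊆ Bᵢ` with `C` semisimple, then `B + C` is a semisimple subalgebra: for a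
nilpotent ideal `W` of it, `eᵢW` is a nilpotent ideal of `C`, so `eᵢW = 0`, which forces `W ⊆ B`.
Maximality of `B` then gives `C ⊆ B`, whence `C = eᵢC ⊆ eᵢB`. -/

/-- The product of two subspaces of a (not necessarily unital) algebra. -/
def Submodule.mulSub (F : Type*) [Field F] {Q : Type*} [NonUnitalRing Q] [Module F Q]
    (I J : Submodule F Q) : Submodule F Q :=
  Submodule.span F {z | ∃ x ∈ I, ∃ y ∈ J, z = x * y}

/-- `Submodule.powSub F I n = I^(n+1)`. -/
def Submodule.powSub (F : Type*) [Field F] {Q : Type*} [NonUnitalRing Q] [Module F Q]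
    (I : Submodule F Q) : ℕ → Submodule F Q
  | 0 => I
  | n + 1 => Submodule.mulSub F (Submodule.powSub F I n) I

/-- A generalized `H`-action on an algebra. -/
def IsGenAction {F : Type*} [Field F] {Q : Type*} [NonUnitalRing Q] [Module F Q]
    {H : Type*} [Ring H] [Algebra F H] (ρ : H →ₐ[F] Module.End F Q) : Prop :=
  ∀ h : H, ∃ (k : ℕ) (h₁ h₂ h₃ h₄ : Fin k → H), ∀ a b : Q,
    ρ h (a * b) = ∑ i : Fin k, (ρ (h₁ i) a * ρ (h₂ i) b + ρ (h₃ i) b * ρ (h₄ i) a)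

/-- A multiplicatively closed subspace `C` is semisimple iff it has no nonzero nilpotent
two-sided ideal. -/
def IsSemisimplePiece (F : Type*) [Field F] {Q : Type*} [NonUnitalRing Q] [Module F Q]
    (C : Submodule F Q) : Prop :=
  ∀ W : Submodule F Q, W ≤ C →
    (∀ c ∈ C, ∀ w ∈ W, c * w ∈ W ∧ w * c ∈ W) →
    (∃ n : ℕ, Submodule.powSub F W n = ⊥) → W = ⊥

namespace Submodule

variable {F : Type*} [Field F] {Q : Type*} [NonUnitalRing Q] [Module F Q]

theorem mul_mem_mulSub {I J : Submodule F Q} {x y : Q} (hx : x ∈ I) (hy : y ∈ J) :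
    x * y ∈ Submodule.mulSub F I J :=
  subset_span ⟨x, hx, y, hy, rfl⟩

theorem mulSub_mono {I I' J J' : Submodule F Q} (hI : I ≤ I') (hJ : J ≤ J') :
    Submodule.mulSub F I J ≤ Submodule.mulSub F I' J' :=
  span_mono (by rintro _ ⟨x, hx, y, hy, rfl⟩; exact ⟨x, hI hx, y, hJ hy, rfl⟩)

theorem powSub_mono {I J : Submodule F Q} (h : I ≤ J) :
    ∀ n, Submodule.powSub F I n ≤ Submodule.powSub F J n
  | 0 => h
  | n + 1 => mulSub_mono (powSub_mono h n) h

theorem mul_eq_zero_of_disjoint {I J : Submodule F Q} (hIJ : Disjoint I J)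
    (hI : ∀ a, ∀ x ∈ I, x * a ∈ I) (hJ : ∀ a, ∀ y ∈ J, a * y ∈ J) {x y : Q}
    (hx : x ∈ I) (hy : y ∈ J) : x * y = 0 :=
  disjoint_def.mp hIJ _ (hI y x hx) (hJ x y hy)

end Submodule

theorem IsIdempotentElem.eq_zero_of_mem_of_powSub_eq_bot {F : Type*} [Field F] {Q : Type*}
    [NonUnitalRing Q] [Module F Q] {I : Submodule F Q} {n : ℕ}
    (hn : Submodule.powSub F I n = ⊥) {u : Q} (hu : IsIdempotentElem u) (huI : u ∈ I) :
    u = 0 := by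
  have hpow : ∀ m, u ∈ Submodule.powSub F I m := by
    intro m
    induction m with
    | zero => exact huI
    | succ m ih => exact hu.eq ▸ Submodule.mul_mem_mulSub ih huI
  simpa [hn] using hpow n

theorem IsIdempotentElem.sub_self_mul_of_commute {R : Type*} [NonUnitalRing R] {u b : R}
    (hu : IsIdempotentElem u) (hb : IsIdempotentElem b) (hub : Commute u b) :
    IsIdempotentElem (u - u * b) := by
  have hub_idem : IsIdempotentElem (u * b) := hu.mul_of_commute hub hb
  have h₁ : u * (u * b) = u * b := by rw [← mul_assoc, hu.eq]
  have h₂ : u * b * u = u * b := by rw [mul_assoc, ← hub.eq, ← mul_assoc, hu.eq]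
  rw [IsIdempotentElem, sub_mul, mul_sub, mul_sub, hu.eq, h₁, h₂, hub_idem.eq]
  abel

namespace iSupIndep

variable {F : Type*} [Field F] {Q : Type*} [NonUnitalRing Q] [Module F Q]
  {ι : Type*} {Bi : ι → Submodule F Q} {e : ι → Q}

theorem unit_mul_eq_zero_of_ne (hindep : iSupIndep Bi)
    (hideal : ∀ i, ∀ a, ∀ x ∈ Bi i, a * x ∈ Bi i ∧ x * a ∈ Bi i) (he : ∀ i, e i ∈ Bi i)
    {i j : ι} (hij : i ≠ j) {y : Q} (hy : y ∈ Bi j) : e i * y = 0 ∧ y * e i = 0 :=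
  have hdisj := hindep.pairwiseDisjoint hij
  ⟨Submodule.mul_eq_zero_of_disjoint hdisj
      (fun a x hx => (hideal i a x hx).2) (fun a x hx => (hideal j a x hx).1) (he i) hy,
    Submodule.mul_eq_zero_of_disjoint hdisj.symm
      (fun a x hx => (hideal j a x hx).2) (fun a x hx => (hideal i a x hx).1) hy (he i)⟩

theorem commute_unit (hindep : iSupIndep Bi)
    (hideal : ∀ i, ∀ a, ∀ x ∈ Bi i, a * x ∈ Bi i ∧ x * a ∈ Bi i) (htop : ⨆ i, Bi i = ⊤)
    (he : ∀ i, e i ∈ Bi i) (hunit : ∀ i, ∀ x ∈ Bi i, e i * x = x ∧ x * e i = x) (i : ι) (x : Q) :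
    Commute (e i) x := by
  have hx : x ∈ ⨆ j, Bi j := htop ▸ Submodule.mem_top
  induction hx using Submodule.iSup_induction' with
  | mem j y hy =>
    by_cases hij : i = j
    · subst hij
      exact (hunit i y hy).1.trans (hunit i y hy).2.symm
    · obtain ⟨hey, hye⟩ := hindep.unit_mul_eq_zero_of_ne hideal he hij hy
      exact hey.trans hye.symm
  | zero => exact Commute.zero_right _
  | add y z _ _ hy hz => exact hy.add_right hz

theorem sum_units_mul_eq_self [Fintype ι] (hindep : iSupIndep Bi)
    (hideal : ∀ i, ∀ a, ∀ x ∈ Bi i, a * x ∈ Bi i ∧ x * a ∈ Bi i) (htop : ⨆ i, Bi i = ⊤)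
    (he : ∀ i, e i ∈ Bi i) (hunit : ∀ i, ∀ x ∈ Bi i, e i * x = x ∧ x * e i = x) (x : Q) :
    (∑ i, e i) * x = x := by
  have hx : x ∈ ⨆ j, Bi j := htop ▸ Submodule.mem_top
  induction hx using Submodule.iSup_induction' with
  | mem j y hy =>
    rw [Finset.sum_mul, Finset.sum_eq_single j
      (fun i _ hij => (hindep.unit_mul_eq_zero_of_ne hideal he hij hy).1) (by simp)]
    exact (hunit j y hy).1
  | zero => exact mul_zero _
  | add y z _ _ hy hz => rw [mul_add, hy, hz]

end iSupIndep

theorem NonUnitalSubalgebra.mem_of_isIdempotentElem_of_isCompl {F : Type*} [Field F] {Q : Type*}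
    [NonUnitalRing Q] [Module F Q] (B : NonUnitalSubalgebra F Q) {J : Submodule F Q}
    (hJ : ∀ a, ∀ x ∈ J, a * x ∈ J ∧ x * a ∈ J) {n : ℕ} (hJnil : Submodule.powSub F J n = ⊥)
    (hBJ : IsCompl B.toSubmodule J) {u : Q} (hu : IsIdempotentElem u)
    (hcomm : ∀ x, Commute u x) : u ∈ B := by
  obtain ⟨b, hb, j, hj, hbj⟩ :=
    Submodule.mem_sup.mp (hBJ.sup_eq_top ▸ Submodule.mem_top (x := u))
  obtain rfl : b = u - j := eq_sub_of_add_eq hbj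
  replace hb : u - j ∈ B := hb
  have hb_idem : IsIdempotentElem (u - j) := by
    have hBmem : (u - j) * (u - j) - (u - j) ∈ B.toSubmodule := sub_mem (B.mul_mem hb hb) hb
    have hJmem : (u - j) * (u - j) - (u - j) ∈ J := by
      have : (u - j) * (u - j) - (u - j) = j - u * j - j * u + j * j := by
        rw [sub_mul, mul_sub, mul_sub, hu.eq]; abel
      rw [this]
      exact add_mem (sub_mem (sub_mem hj (hJ u j hj).1) (hJ u j hj).2) (hJ j j hj).1
    exact sub_eq_zero.mp (Submodule.disjoint_def.mp hBJ.disjoint _ hBmem hJmem)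
  have h₁ : u - u * (u - j) = 0 := by
    refine (hu.sub_self_mul_of_commute hb_idem (hcomm _)).eq_zero_of_mem_of_powSub_eq_bot
      hJnil ?_
    rw [mul_sub, hu.eq, sub_sub_cancel]
    exact (hJ u j hj).1
  have h₂ : (u - j) - (u - j) * u = 0 := by
    refine (hb_idem.sub_self_mul_of_commute hu (hcomm _).symm).eq_zero_of_mem_of_powSub_eq_bot
      hJnil ?_
    rw [sub_mul, hu.eq, sub_sub_sub_cancel_left]
    exact sub_mem (hJ u j hj).2 hj
  have hu_eq : u = u - j := calc
    u = u * (u - j) := sub_eq_zero.mp h₁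
    _ = (u - j) * u := (hcomm _).eq
    _ = u - j := (sub_eq_zero.mp h₂).symm
  exact hu_eq ▸ hb

namespace NonUnitalSubalgebra

variable {F : Type*} [Field F] {Q : Type*} [NonUnitalRing Q] [Module F Q]
  [SMulCommClass F Q Q] (B : NonUnitalSubalgebra F Q) {e : Q}

def corner (e : Q) : Submodule F Q :=
  B.toSubmodule.map (LinearMap.mulLeft F e)

variable {B}

theorem mem_corner {x : Q} : x ∈ B.corner e ↔ ∃ b ∈ B, e * b = x :=
  Submodule.mem_map

theorem corner_le_of_mem {I : Submodule F Q} (hI : ∀ a, ∀ x ∈ I, x * a ∈ I) (he : e ∈ I) :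
    B.corner e ≤ I := by
  rintro _ ⟨b, -, rfl⟩
  exact hI b e he

theorem corner_le (he : e ∈ B) : B.corner e ≤ B.toSubmodule := by
  rintro _ ⟨b, hb, rfl⟩
  exact B.mul_mem he hb

theorem self_mem_corner (he : e ∈ B) (hidem : IsIdempotentElem e) : e ∈ B.corner e :=
  mem_corner.mpr ⟨e, he, hidem.eq⟩

theorem mul_eq_self_of_mem_corner (hidem : IsIdempotentElem e) {x : Q} (hx : x ∈ B.corner e) :
    e * x = x := by
  obtain ⟨b, -, rfl⟩ := mem_corner.mp hx
  rw [← mul_assoc, hidem.eq]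

theorem mul_mem_corner_right {x b : Q} (hx : x ∈ B.corner e) (hb : b ∈ B) :
    x * b ∈ B.corner e := by
  obtain ⟨b', hb', rfl⟩ := mem_corner.mp hx
  exact mem_corner.mpr ⟨b' * b, B.mul_mem hb' hb, (mul_assoc _ _ _).symm⟩

theorem mul_mem_corner_left (hcomm : ∀ x, Commute e x) {b x : Q} (hb : b ∈ B)
    (hx : x ∈ B.corner e) : b * x ∈ B.corner e := by
  obtain ⟨b', hb', rfl⟩ := mem_corner.mp hx
  refine mem_corner.mpr ⟨b * b', B.mul_mem hb hb', ?_⟩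
  rw [← mul_assoc, ← mul_assoc, (hcomm b).eq]

theorem isSemisimplePiece_corner (hB : IsSemisimplePiece F B.toSubmodule) (he : e ∈ B)
    (hidem : IsIdempotentElem e) (hcomm : ∀ x, Commute e x) :
    IsSemisimplePiece F (B.corner e) := by
  intro W hW hWideal hWnil
  refine hB W (hW.trans (corner_le he)) (fun c hc w hw => ?_) hWnil
  have hec : e * c ∈ B.corner e := mem_corner.mpr ⟨c, hc, rfl⟩
  have hew : e * w = w := mul_eq_self_of_mem_corner hidem (hW hw)
  have hcw : c * w = e * c * w := by rw [(hcomm c).eq, mul_assoc, hew]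
  have hwc : w * c = w * (e * c) := by rw [← mul_assoc, ← (hcomm w).eq, hew]
  rw [hcw, hwc]
  exact hWideal _ hec w hw

theorem mul_mem_of_corner_le {C : Submodule F Q} (hcomm : ∀ x, Commute e x)
    (hCmul : ∀ x ∈ C, ∀ y ∈ C, x * y ∈ C) (hCe : ∀ c ∈ C, e * c = c) (hBC : B.corner e ≤ C)
    {b c : Q} (hb : b ∈ B) (hc : c ∈ C) : b * c ∈ C ∧ c * b ∈ C := by
  have heb : e * b ∈ C := hBC (mem_corner.mpr ⟨b, hb, rfl⟩)
  have hbc : b * c = e * b * c := by rw [(hcomm b).eq, mul_assoc, hCe c hc]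
  have hcb : c * b = c * (e * b) := by rw [← mul_assoc, ← (hcomm c).eq, hCe c hc]
  rw [hbc, hcb]
  exact ⟨hCmul _ heb _ hc, hCmul _ hc _ heb⟩

theorem mul_mem_sup_of_corner_le {C : Submodule F Q} (hcomm : ∀ x, Commute e x)
    (hCmul : ∀ x ∈ C, ∀ y ∈ C, x * y ∈ C) (hCe : ∀ c ∈ C, e * c = c) (hBC : B.corner e ≤ C)
    {x y : Q} (hx : x ∈ B.toSubmodule ⊔ C) (hy : y ∈ B.toSubmodule ⊔ C) :
    x * y ∈ B.toSubmodule ⊔ C := by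
  obtain ⟨bx, hbx, cx, hcx, rfl⟩ := Submodule.mem_sup.mp hx
  obtain ⟨b, hb, c, hc, rfl⟩ := Submodule.mem_sup.mp hy
  rw [add_mul, mul_add, mul_add]
  exact add_mem (add_mem (Submodule.mem_sup_left (B.mul_mem hbx hb))
      (Submodule.mem_sup_right (mul_mem_of_corner_le hcomm hCmul hCe hBC hbx hc).1))
    (Submodule.mem_sup_right
      (add_mem (mul_mem_of_corner_le hcomm hCmul hCe hBC hb hcx).2 (hCmul _ hcx _ hc)))

theorem mul_eq_zero_of_mem_ideal_sup {C : Submodule F Q} (hcomm : ∀ x, Commute e x)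
    (hCe : ∀ c ∈ C, e * c = c) (hBC : B.corner e ≤ C) (hC : IsSemisimplePiece F C)
    (he : e ∈ B) {W : Submodule F Q} (hW : W ≤ B.toSubmodule ⊔ C)
    (hWideal : ∀ c ∈ B.toSubmodule ⊔ C, ∀ w ∈ W, c * w ∈ W ∧ w * c ∈ W)
    (hWnil : ∃ n, Submodule.powSub F W n = ⊥) {w : Q} (hw : w ∈ W) : e * w = 0 := by
  have heW : W.map (LinearMap.mulLeft F e) = ⊥ := by
    refine hC _ ?_ ?_ ?_
    · rintro _ ⟨w, hw, rfl⟩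
      obtain ⟨b, hb, c, hc, hbc⟩ := Submodule.mem_sup.mp (hW hw)
      rw [LinearMap.mulLeft_apply, ← hbc, mul_add, hCe c hc]
      exact add_mem (hBC (mem_corner.mpr ⟨b, hb, rfl⟩)) hc
    · rintro c hc _ ⟨w, hw, rfl⟩
      have hcw := hWideal c (Submodule.mem_sup_right hc) w hw
      constructor
      · have : c * (e * w) = e * (c * w) := by
          rw [← mul_assoc, ← mul_assoc, ← (hcomm c).eq]
        exact this ▸ Submodule.mem_map_of_mem hcw.1
      · exact (mul_assoc e w c).symm ▸ Submodule.mem_map_of_mem hcw.2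
    · obtain ⟨n, hn⟩ := hWnil
      refine ⟨n, eq_bot_iff.mpr (hn ▸ Submodule.powSub_mono ?_ n)⟩
      rintro _ ⟨w, hw, rfl⟩
      exact (hWideal e (Submodule.mem_sup_left he) w hw).1
  simpa [heW] using Submodule.mem_map_of_mem (f := LinearMap.mulLeft F e) hw

theorem isSemisimplePiece_sup_of_corner_le {C : Submodule F Q} (hcomm : ∀ x, Commute e x)
    (hCe : ∀ c ∈ C, e * c = c) (hBC : B.corner e ≤ C) (hB : IsSemisimplePiece F B.toSubmodule)
    (hC : IsSemisimplePiece F C) (he : e ∈ B) : IsSemisimplePiece F (B.toSubmodule ⊔ C) := by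
  intro W hW hWideal hWnil
  refine hB W (fun w hw => ?_) (fun b hb => hWideal b (Submodule.mem_sup_left hb)) hWnil
  obtain ⟨b, hb, c, hc, rfl⟩ := Submodule.mem_sup.mp (hW hw)
  have hbc : e * b + c = 0 := by
    rw [← hCe c hc, ← mul_add]
    exact mul_eq_zero_of_mem_ideal_sup hcomm hCe hBC hC he hW hWideal hWnil hw
  rw [eq_neg_of_add_eq_zero_right hbc]
  exact add_mem hb (neg_mem (B.mul_mem he hb))

theorem eq_corner_of_corner_le (hB : IsSemisimplePiece F B.toSubmodule)
    (hBmax : ∀ B' : NonUnitalSubalgebra F Q, B ≤ B' →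
      IsSemisimplePiece F B'.toSubmodule → B' = B)
    (he : e ∈ B) (hcomm : ∀ x, Commute e x) {C : Submodule F Q}
    (hCmul : ∀ x ∈ C, ∀ y ∈ C, x * y ∈ C) (hCe : ∀ c ∈ C, e * c = c) (hBC : B.corner e ≤ C)
    (hC : IsSemisimplePiece F C) : C = B.corner e := by
  let D := (B.toSubmodule ⊔ C).toNonUnitalSubalgebra
    fun _ _ => mul_mem_sup_of_corner_le hcomm hCmul hCe hBC
  have hDB : D = B := hBmax D (fun _ hx => Submodule.mem_sup_left hx)
    (isSemisimplePiece_sup_of_corner_le hcomm hCe hBC hB hC he)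
  refine le_antisymm (fun c hc => mem_corner.mpr ⟨c, ?_, hCe c hc⟩) hBC
  exact hDB ▸ Submodule.mem_sup_right hc

theorem iSup_corner {ι : Type*} [Fintype ι] {e : ι → Q} (he : ∀ i, e i ∈ B)
    (hsum : ∀ x, (∑ i, e i) * x = x) : ⨆ i, B.corner (e i) = B.toSubmodule := by
  refine le_antisymm (iSup_le fun i => corner_le (he i)) fun x hx => ?_
  rw [← hsum x, Finset.sum_mul]
  exact sum_mem fun i _ => Submodule.mem_iSup_of_mem i (mem_corner.mpr ⟨x, hx, rfl⟩)

end NonUnitalSubalgebra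

open NonUnitalSubalgebra

theorem maximal_semisimple_decomposition_general (F : Type*) [Field F]
    (Q : Type*) [NonUnitalRing Q] [Module F Q] [SMulCommClass F Q Q]
    -- the decomposition `Q = B₁ ⊕ ⋯ ⊕ B_q` into `H`-invariant ideals
    (q : ℕ) (Bi : Fin q → Submodule F Q)
    (hBideal : ∀ i, ∀ a : Q, ∀ x ∈ Bi i, a * x ∈ Bi i ∧ x * a ∈ Bi i)
    (hBint : DirectSum.IsInternal Bi)
    -- each `Bᵢ` is unital with identity `e i`
    (e : Fin q → Q) (he : ∀ i, e i ∈ Bi i)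
    (heunit : ∀ i, ∀ x ∈ Bi i, e i * x = x ∧ x * e i = x)
    -- `JQ` is the Jacobson radical of `Q` (its maximal nilpotent two-sided ideal)
    (JQ : Submodule F Q)
    (hJQideal : ∀ a : Q, ∀ x ∈ JQ, a * x ∈ JQ ∧ x * a ∈ JQ)
    (hJQnil : ∃ n : ℕ, Submodule.powSub F JQ n = ⊥)
    -- `B` is a maximal semisimple subalgebra with `Q = B ⊕ J(Q)`
    (B : NonUnitalSubalgebra F Q)
    (hBss : IsSemisimplePiece F B.toSubmodule)
    (hBmax : ∀ B' : NonUnitalSubalgebra F Q, B ≤ B' →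
      IsSemisimplePiece F B'.toSubmodule → B' = B)
    (hBcompl : IsCompl B.toSubmodule JQ) :
    -- `B̃ᵢ := 1_{Bᵢ}B`
    let Bt : Fin q → Submodule F Q :=
      fun i => Submodule.map (LinearMap.mulLeft F (e i)) B.toSubmodule
    -- `1_B = 1_{A/J^H(A)}`, i.e. `Σᵢ eᵢ` is the identity of `Q` and belongs to `B`
    ((∑ i, e i) ∈ B ∧ (∀ x : Q, (∑ i, e i) * x = x ∧ x * (∑ i, e i) = x)) ∧
    -- `B = B̃₁ ⊕ ⋯ ⊕ B̃_q` (direct sum of ideals of `B`)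
    (iSupIndep Bt ∧ (⨆ i, Bt i) = B.toSubmodule ∧
      ∀ i, ∀ b ∈ B, ∀ x ∈ Bt i, b * x ∈ Bt i ∧ x * b ∈ Bt i) ∧
    -- each `B̃ᵢ` is a maximal semisimple subalgebra of `Bᵢ`
    (∀ i, Bt i ≤ Bi i ∧ (∀ x ∈ Bt i, ∀ y ∈ Bt i, x * y ∈ Bt i) ∧
      IsSemisimplePiece F (Bt i) ∧
      ∀ C : Submodule F Q, (∀ x ∈ C, ∀ y ∈ C, x * y ∈ C) → C ≤ Bi i → Bt i ≤ C →
        IsSemisimplePiece F C → C = Bt i) ∧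
    -- `1_{B̃ᵢ} = 1_{Bᵢ} ∈ B`
    (∀ i, e i ∈ Bt i ∧ e i ∈ B ∧ ∀ x ∈ Bt i, e i * x = x ∧ x * e i = x) := by
  intro Bt
  obtain ⟨n, hn⟩ := hJQnil
  have hindep := hBint.submodule_iSupIndep
  have htop := hBint.submodule_iSup_eq_top
  have hcomm := hindep.commute_unit hBideal htop he heunit
  have hidem : ∀ i, IsIdempotentElem (e i) := fun i => (heunit i (e i) (he i)).1
  have hone := hindep.sum_units_mul_eq_self hBideal htop he heunit
  have heB : ∀ i, e i ∈ B := fun i =>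
    B.mem_of_isIdempotentElem_of_isCompl hJQideal hn hBcompl (hidem i) (hcomm i)
  have hBtBi : ∀ i, Bt i ≤ Bi i := fun i =>
    corner_le_of_mem (fun a x hx => (hBideal i a x hx).2) (he i)
  have hBtunit : ∀ i, ∀ x ∈ Bt i, e i * x = x ∧ x * e i = x := fun i x hx =>
    have hex := mul_eq_self_of_mem_corner (hidem i) hx
    ⟨hex, (hcomm i x).eq.symm.trans hex⟩
  refine ⟨⟨sum_mem fun i _ => heB i, fun x => ⟨hone x, ?_⟩⟩,
    ⟨hindep.mono hBtBi, iSup_corner heB hone, fun i b hb x hx =>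
      ⟨mul_mem_corner_left (hcomm i) hb hx, mul_mem_corner_right hx hb⟩⟩,
    fun i => ⟨hBtBi i, fun x hx y hy => mul_mem_corner_right hx (corner_le (heB i) hy),
      isSemisimplePiece_corner hBss (heB i) (hidem i) (hcomm i), ?_⟩,
    fun i => ⟨self_mem_corner (heB i) (hidem i), heB i, hBtunit i⟩⟩
  · exact (Commute.sum_left _ _ _ fun i _ => hcomm i x).eq.symm.trans (hone x)
  · intro C hCmul hCBi hBtC hC
    exact eq_corner_of_corner_le hBss hBmax (heB i) (hcomm i) hCmul
      (fun c hc => (heunit i c (hCBi hc)).1) hBtC hC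

/-- Let `Q = A/J^H(A) = B₁ ⊕ ⋯ ⊕ B_q` (direct sum of `H`-invariant ideals, each `Bᵢ`
unital with identity `eᵢ`), and let `B` be the maximal semisimple subalgebra of `Q` with
`Q = B ⊕ J(Q)` from the weak Wedderburn–Malcev lemma.  Then `1_B = 1_Q = Σᵢ eᵢ`, the
algebras `B̃ᵢ := 1_{Bᵢ}B` satisfy `B = B̃₁ ⊕ ⋯ ⊕ B̃_q` (direct sum of ideals of `B`),
each `B̃ᵢ` is a maximal semisimple subalgebra of `Bᵢ`, and `1_{B̃ᵢ} = 1_{Bᵢ} ∈ B`. -/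
theorem maximal_semisimple_decomposition (F : Type*) [Field F] [IsAlgClosed F]
    (Q : Type*) [NonUnitalRing Q] [Module F Q] [SMulCommClass F Q Q] [IsScalarTower F Q Q]
    [FiniteDimensional F Q]
    (H : Type*) [Ring H] [Algebra F H] (ρ : H →ₐ[F] Module.End F Q)
    (hgen : IsGenAction ρ)
    -- the decomposition `Q = B₁ ⊕ ⋯ ⊕ B_q` into `H`-invariant ideals
    (q : ℕ) (Bi : Fin q → Submodule F Q)
    (hBideal : ∀ i, ∀ a : Q, ∀ x ∈ Bi i, a * x ∈ Bi i ∧ x * a ∈ Bi i)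
    (hBinv : ∀ i, ∀ h : H, ∀ x ∈ Bi i, ρ h x ∈ Bi i)
    (hBint : DirectSum.IsInternal Bi)
    -- each `Bᵢ` is unital with identity `e i`
    (e : Fin q → Q) (he : ∀ i, e i ∈ Bi i)
    (heunit : ∀ i, ∀ x ∈ Bi i, e i * x = x ∧ x * e i = x)
    -- `JQ` is the Jacobson radical of `Q` (its maximal nilpotent two-sided ideal)
    (JQ : Submodule F Q)
    (hJQideal : ∀ a : Q, ∀ x ∈ JQ, a * x ∈ JQ ∧ x * a ∈ JQ)
    (hJQnil : ∃ n : ℕ, Submodule.powSub F JQ n = ⊥)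
    (hJQmax : ∀ I : Submodule F Q, (∀ a : Q, ∀ x ∈ I, a * x ∈ I ∧ x * a ∈ I) →
      (∃ n : ℕ, Submodule.powSub F I n = ⊥) → I ≤ JQ)
    -- `B` is a maximal semisimple subalgebra with `Q = B ⊕ J(Q)`
    (B : NonUnitalSubalgebra F Q)
    (hBss : IsSemisimplePiece F B.toSubmodule)
    (hBmax : ∀ B' : NonUnitalSubalgebra F Q, B ≤ B' →
      IsSemisimplePiece F B'.toSubmodule → B' = B)
    (hBcompl : IsCompl B.toSubmodule JQ) :
    -- `B̃ᵢ := 1_{Bᵢ}B`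
    let Bt : Fin q → Submodule F Q :=
      fun i => Submodule.map (LinearMap.mulLeft F (e i)) B.toSubmodule
    -- `1_B = 1_{A/J^H(A)}`, i.e. `Σᵢ eᵢ` is the identity of `Q` and belongs to `B`
    ((∑ i, e i) ∈ B ∧ (∀ x : Q, (∑ i, e i) * x = x ∧ x * (∑ i, e i) = x)) ∧
    -- `B = B̃₁ ⊕ ⋯ ⊕ B̃_q` (direct sum of ideals of `B`)
    (iSupIndep Bt ∧ (⨆ i, Bt i) = B.toSubmodule ∧
      ∀ i, ∀ b ∈ B, ∀ x ∈ Bt i, b * x ∈ Bt i ∧ x * b ∈ Bt i) ∧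
    -- each `B̃ᵢ` is a maximal semisimple subalgebra of `Bᵢ`
    (∀ i, Bt i ≤ Bi i ∧ (∀ x ∈ Bt i, ∀ y ∈ Bt i, x * y ∈ Bt i) ∧
      IsSemisimplePiece F (Bt i) ∧
      ∀ C : Submodule F Q, (∀ x ∈ C, ∀ y ∈ C, x * y ∈ C) → C ≤ Bi i → Bt i ≤ C →
        IsSemisimplePiece F C → C = Bt i) ∧
    -- `1_{B̃ᵢ} = 1_{Bᵢ} ∈ B`
    (∀ i, e i ∈ Bt i ∧ e i ∈ B ∧ ∀ x ∈ Bt i, e i * x = x ∧ x * e i = x) :=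
  maximal_semisimple_decomposition_general F Q q Bi hBideal hBint e he heunit JQ hJQideal hJQnil B
    hBss hBmax hBcompl
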